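/- arXiv:1011.5358 — 3 statements merged into one kernel-verified Lean document; each statement's English description precedes it below -/
import Mathlib

section
/- For m ≥ 2 odd and t ≥ 1, the expected Coxeter length of a product of t independent uniformly random reflections in the dihedral group I_2(m) equals m/2 - (-1)^t/(2m). -/
open Classical

/-- Minimal length of a word over `S` whose product is `w`. -/
noncomputable def wordLength {G : Type*} [Group G] (S : Set G) (w : G) : ℕ :=
  sInf {k | ∃ l : List G, l.length = k ∧ (∀ x ∈ l, x ∈ S) ∧ l.prod = w}

/-- The two Coxeter generators (simple reflections) of the dihedral group `I₂(m)`. -/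
def dihedralGens (m : ℕ) : Set (DihedralGroup m) :=
  {DihedralGroup.sr 0, DihedralGroup.sr 1}

/-- Coxeter length in the dihedral group `I₂(m)`. -/
noncomputable def dLen (m : ℕ) (w : DihedralGroup m) : ℕ :=
  wordLength (dihedralGens m) w

/-- The set of reflections (conjugates of the generators) in `I₂(m)`. -/
def dihedralRefl (m : ℕ) : Set (DihedralGroup m) :=
  {w | ∃ g s, s ∈ dihedralGens m ∧ w = g * s * g⁻¹}

/-- Expected Coxeter length of a product of `t` independent uniformly random
reflections in `I₂(m)`. -/
noncomputable def dihedralExpLen (m t : ℕ) [NeZero m] : ℝ :=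
  (∑ f ∈ Finset.univ.filter (fun f : Fin t → DihedralGroup m => ∀ i, f i ∈ dihedralRefl m),
      (dLen m (List.ofFn f).prod : ℝ)) /
    ((Finset.univ.filter (fun w : DihedralGroup m => w ∈ dihedralRefl m)).card : ℝ) ^ t


/-
Label the `2m` chambers of the Coxeter complex of `I₂(m)` cyclically by `ZMod (2m)`, the
rotation `r k` by `2k` and the reflection `sr k` by `2k - 1`. Left multiplication by a simple
reflection moves to an adjacent chamber, and from every chamber other than the base one some
simple reflection moves closer to it, so the Coxeter length of `w` is the cyclic distance of
its chamber from `0`.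

Every reflection is some `sr k`, and `k ↦ sr k * w` is a bijection onto the reflections when
`w` is a rotation and onto the rotations when `w` is a reflection. Hence a product of `t`
uniformly random reflections is uniformly distributed on the reflections for `t` odd and on
the rotations for `t` even. For `m` odd the cyclic distances of the odd chambers add up to
`(m² + 1) / 2` and those of the even chambers to `(m² - 1) / 2`.
-/

open DihedralGroup Finset

section WordLength

variable {G : Type*} [Group G] {S : Set G}

theorem wordLength_le_length {l : List G} (hl : ∀ x ∈ l, x ∈ S) :
    wordLength S l.prod ≤ l.length :=
  Nat.sInf_le ⟨l, rfl, hl, rfl⟩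

theorem apply_prod_le_length (φ : G → ℕ) (h1 : φ 1 = 0)
    (hS : ∀ s ∈ S, ∀ w, φ (s * w) ≤ φ w + 1) {l : List G} (hl : ∀ x ∈ l, x ∈ S) :
    φ l.prod ≤ l.length := by
  induction l with
  | nil => simp [h1]
  | cons s l ih =>
    simp only [List.forall_mem_cons] at hl
    grw [List.prod_cons, hS s hl.1, ih hl.2, List.length_cons]

theorem exists_word_length_le (φ : G → ℕ)
    (hdesc : ∀ w, w ≠ 1 → ∃ s ∈ S, φ (s⁻¹ * w) < φ w) (w : G) :
    ∃ l : List G, (∀ x ∈ l, x ∈ S) ∧ l.prod = w ∧ l.length ≤ φ w := by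
  induction hn : φ w using Nat.strong_induction_on generalizing w with
  | _ n ih =>
    by_cases hw : w = 1
    · exact ⟨[], by simp, by simp [hw], by simp⟩
    obtain ⟨s, hs, hlt⟩ := hdesc w hw
    obtain ⟨l, hl, hprod, hlen⟩ := ih _ (hn ▸ hlt) (s⁻¹ * w) rfl
    refine ⟨s :: l, List.forall_mem_cons.2 ⟨hs, hl⟩, by simp [hprod], ?_⟩
    simp only [List.length_cons]
    omega

theorem wordLength_eq (φ : G → ℕ) (h1 : φ 1 = 0) (hS : ∀ s ∈ S, ∀ w, φ (s * w) ≤ φ w + 1)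
    (hdesc : ∀ w, w ≠ 1 → ∃ s ∈ S, φ (s⁻¹ * w) < φ w) (w : G) :
    wordLength S w = φ w := by
  obtain ⟨l, hl, rfl, hlen⟩ := exists_word_length_le φ hdesc w
  refine le_antisymm ((wordLength_le_length hl).trans hlen) (le_csInf ⟨_, l, rfl, hl, rfl⟩ ?_)
  rintro _ ⟨l', rfl, hl', hprod⟩
  exact hprod ▸ apply_prod_le_length φ h1 hS hl'

end WordLength

namespace ZMod

variable {N : ℕ}

theorem natAbs_valMinAbs_add_one_le (x : ZMod N) :
    (x + 1).valMinAbs.natAbs ≤ x.valMinAbs.natAbs + 1 := by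
  have h1 : (1 : ZMod N).valMinAbs.natAbs ≤ 1 := by
    rcases N with _ | N
    · simp
    · rw [valMinAbs_natAbs_eq_min, val_one_eq_one_mod]
      exact (min_le_left _ _).trans (Nat.mod_le _ _)
  exact (natAbs_valMinAbs_add_le x 1).trans ((Int.natAbs_add_le _ _).trans (by omega))

theorem natAbs_valMinAbs_sub_one_le (x : ZMod N) :
    (x - 1).valMinAbs.natAbs ≤ x.valMinAbs.natAbs + 1 := by
  rw [← natAbs_valMinAbs_neg, neg_sub, sub_eq_neg_add, ← natAbs_valMinAbs_neg x]
  exact natAbs_valMinAbs_add_one_le (-x)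

theorem natAbs_valMinAbs_sub_one_lt_or_add_one_lt [NeZero N] {x : ZMod N} (hx : x ≠ 0) :
    (x - 1).valMinAbs.natAbs < x.valMinAbs.natAbs ∨
      (x + 1).valMinAbs.natAbs < x.valMinAbs.natAbs := by
  have hmem := valMinAbs_mem_Ioc x
  have hne : x.valMinAbs ≠ 0 := by rwa [Ne, valMinAbs_eq_zero]
  rcases hne.lt_or_gt with hneg | hpos
  · right
    have hsucc : (x + 1).valMinAbs = x.valMinAbs + 1 := by
      refine (valMinAbs_spec _ _).2 ⟨by push_cast [coe_valMinAbs]; rfl, ?_⟩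
      simp only [Set.mem_Ioc] at hmem ⊢
      omega
    omega
  · left
    have hpred : (x - 1).valMinAbs = x.valMinAbs - 1 := by
      refine (valMinAbs_spec _ _).2 ⟨by push_cast [coe_valMinAbs]; rfl, ?_⟩
      simp only [Set.mem_Ioc] at hmem ⊢
      omega
    omega

theorem sum_val_eq_sum_range {M : Type*} [AddCommMonoid M] (N : ℕ) [NeZero N] (f : ℕ → M) :
    ∑ k : ZMod N, f k.val = ∑ i ∈ range N, f i := by
  obtain ⟨n, rfl⟩ := Nat.exists_eq_succ_of_ne_zero (NeZero.ne N)
  exact Fin.sum_univ_eq_sum_range f (n + 1)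

end ZMod

theorem sum_range_min_sub (n c : ℕ) (hc : c ≤ 2) :
    ∑ i ∈ range (2 * n + 1), min i (2 * n + c - i) = n * (n + c) := by
  induction n with
  | zero => simp
  | succ n ih =>
    have hshift : ∀ i ∈ range (2 * n + 1),
        min (i + 1) (2 * (n + 1) + c - (i + 1)) = min i (2 * n + c - i) + 1 := by
      intro i hi
      rw [mem_range] at hi
      omega
    rw [show range (2 * (n + 1) + 1) = range (2 * n + 1 + 1 + 1) by ring_nf, sum_range_succ,
      sum_range_succ', sum_congr rfl hshift, sum_add_distrib, ih,
      show min (2 * n + 1 + 1) (2 * (n + 1) + c - (2 * n + 1 + 1)) = c by omega]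
    simp
    ring

namespace DihedralGroup

variable {m : ℕ}

def doubleHom (m : ℕ) : ZMod m →+ ZMod (2 * m) :=
  ZMod.lift m ⟨(AddMonoidHom.mulLeft 2).comp (Int.castAddHom _), by
    change (2 : ZMod (2 * m)) * ((m : ℤ) : ZMod (2 * m)) = 0
    exact_mod_cast ZMod.natCast_self (2 * m)⟩

theorem doubleHom_natCast (k : ℕ) : doubleHom m k = ((2 * k : ℕ) : ZMod (2 * m)) := by
  rw [← Int.cast_natCast, doubleHom, ZMod.lift_coe]
  simp

def chamber : DihedralGroup m → ZMod (2 * m)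
  | r k => doubleHom m k
  | sr k => doubleHom m k - 1

theorem chamber_sr_zero_mul_sr_one_mul (w : DihedralGroup m) :
    (chamber (sr 0 * w) = chamber w - 1 ∧ chamber (sr 1 * w) = chamber w + 1) ∨
      (chamber (sr 0 * w) = chamber w + 1 ∧ chamber (sr 1 * w) = chamber w - 1) := by
  have h1 : doubleHom m 1 = 2 := by simpa using doubleHom_natCast (m := m) 1
  rcases w with k | k
  · left
    simp only [sr_mul_r, chamber, zero_add, map_add, h1]
    exact ⟨trivial, by ring⟩
  · right
    simp only [sr_mul_sr, chamber, sub_zero, map_sub, h1]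
    exact ⟨by ring, by ring⟩

variable [NeZero m]

theorem doubleHom_apply (k : ZMod m) : doubleHom m k = ((2 * k.val : ℕ) : ZMod (2 * m)) := by
  conv_lhs => rw [← ZMod.natCast_zmod_val k]
  exact doubleHom_natCast k.val

theorem chamber_eq_zero_iff {w : DihedralGroup m} : chamber w = 0 ↔ w = 1 := by
  rcases w with k | k
  · rw [one_def, r.injEq, chamber, ← ZMod.natCast_zmod_val k, doubleHom_natCast,
      ZMod.natCast_eq_zero_iff, ZMod.natCast_eq_zero_iff]
    exact Nat.mul_dvd_mul_iff_left two_pos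
  · simp only [one_def, reduceCtorEq, iff_false, chamber, sub_eq_zero]
    intro h
    rw [doubleHom_apply] at h
    have h2 := congrArg (ZMod.castHom (dvd_mul_right 2 m) (ZMod 2)) h
    rw [map_natCast, map_one, Nat.cast_mul, ZMod.natCast_self, zero_mul] at h2
    exact zero_ne_one h2

theorem dLen_eq_natAbs_valMinAbs_chamber (w : DihedralGroup m) :
    dLen m w = (chamber w).valMinAbs.natAbs := by
  refine wordLength_eq (fun w => (chamber w).valMinAbs.natAbs) (by simp [← r_zero, chamber])
    ?_ ?_ w
  · rintro s (rfl | rfl) w <;>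
      rcases chamber_sr_zero_mul_sr_one_mul w with ⟨h0, h1⟩ | ⟨h0, h1⟩ <;>
      simp only [h0, h1, ZMod.natAbs_valMinAbs_add_one_le, ZMod.natAbs_valMinAbs_sub_one_le]
  · intro w hw
    have hlt := ZMod.natAbs_valMinAbs_sub_one_lt_or_add_one_lt (chamber_eq_zero_iff.not.2 hw)
    simp only [dihedralGens, Set.mem_insert_iff, Set.mem_singleton_iff, exists_eq_or_imp,
      exists_eq_left, inv_sr]
    rcases chamber_sr_zero_mul_sr_one_mul w with ⟨h0, h1⟩ | ⟨h0, h1⟩ <;>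
      rw [h0, h1] <;> tauto

theorem natAbs_valMinAbs_chamber_r (k : ZMod m) :
    (chamber (r k)).valMinAbs.natAbs = 2 * min k.val (m - k.val) := by
  have hk := ZMod.val_lt k
  rw [chamber, doubleHom_apply, ZMod.valMinAbs_natAbs_eq_min, ZMod.val_natCast_of_lt (by omega)]
  omega

theorem natAbs_valMinAbs_chamber_sr_neg (k : ZMod m) :
    (chamber (sr (-k))).valMinAbs.natAbs = 2 * min k.val (m - 1 - k.val) + 1 := by
  have hk := ZMod.val_lt k
  have hneg : chamber (sr (-k)) = -((2 * k.val + 1 : ℕ) : ZMod (2 * m)) := by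
    rw [chamber, map_neg, doubleHom_apply]
    push_cast
    ring
  rw [hneg, ZMod.natAbs_valMinAbs_neg, ZMod.valMinAbs_natAbs_eq_min,
    ZMod.val_natCast_of_lt (by omega)]
  omega

theorem two_mul_sum_dLen_r_add_one (hm : Odd m) : 2 * ∑ k, dLen m (r k) + 1 = m ^ 2 := by
  obtain ⟨n, rfl⟩ := hm
  simp only [dLen_eq_natAbs_valMinAbs_chamber, natAbs_valMinAbs_chamber_r, ← mul_sum]
  rw [ZMod.sum_val_eq_sum_range (2 * n + 1) (fun i => min i (2 * n + 1 - i)),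
    sum_range_min_sub n 1 (by norm_num)]
  ring

theorem two_mul_sum_dLen_sr (hm : Odd m) : 2 * ∑ k, dLen m (sr k) = m ^ 2 + 1 := by
  obtain ⟨n, rfl⟩ := hm
  rw [← Equiv.sum_comp (Equiv.neg _)]
  simp only [Equiv.neg_apply, dLen_eq_natAbs_valMinAbs_chamber, natAbs_valMinAbs_chamber_sr_neg]
  have hsum := sum_range_min_sub n 0 (by norm_num)
  simp only [add_zero] at hsum
  rw [ZMod.sum_val_eq_sum_range (2 * n + 1) (fun i => 2 * min i (2 * n + 1 - 1 - i) + 1),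
    sum_add_distrib, ← mul_sum, Nat.add_sub_cancel, hsum]
  simp
  ring

theorem dihedralRefl_eq_range : dihedralRefl m = Set.range sr := by
  ext w
  constructor
  · rintro ⟨g, s, (rfl | rfl), rfl⟩ <;> rcases g with i | i <;>
      simp [inv_r, inv_sr, r_mul_sr, sr_mul_r, sr_mul_sr]
  · rintro ⟨k, rfl⟩
    refine ⟨r (-(k.val / 2 : ℕ)), sr (k.val % 2 : ℕ), ?_, ?_⟩
    · rcases Nat.mod_two_eq_zero_or_one k.val with h | h <;> simp [h, dihedralGens]
    · rw [inv_r, neg_neg, r_mul_sr, sr_mul_r]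
      conv_lhs => rw [← ZMod.natCast_zmod_val k, ← Nat.mod_add_div k.val 2]
      push_cast
      ring_nf

theorem dihedralExpLen_eq_sum (t : ℕ) :
    dihedralExpLen m t =
      (∑ g : Fin t → ZMod m, (dLen m (List.ofFn fun i => sr (g i)).prod : ℝ)) / m ^ t := by
  have hsr : Function.Injective (sr : ZMod m → DihedralGroup m) := fun _ _ h => sr.inj h
  have hrefl : univ.filter (· ∈ dihedralRefl m) = univ.map ⟨sr, hsr⟩ := by
    ext w
    simp [dihedralRefl_eq_range]
  have htuples : univ.filter (fun f : Fin t → DihedralGroup m => ∀ i, f i ∈ dihedralRefl m) =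
      univ.map ⟨fun g i => sr (g i), fun _ _ h => funext fun i => hsr (congrFun h i)⟩ := by
    ext f
    simp only [dihedralRefl_eq_range, mem_filter, mem_univ, true_and, mem_map, Set.mem_range]
    exact ⟨fun h => ⟨fun i => (h i).choose, funext fun i => (h i).choose_spec⟩,
      by rintro ⟨g, rfl⟩ i; exact ⟨g i, rfl⟩⟩
  rw [dihedralExpLen, htuples, hrefl, sum_map, card_map, card_univ, ZMod.card]
  rfl

section SumOverWords

variable {M : Type*} [AddCommMonoid M] (f : DihedralGroup m → M)

theorem sum_sr_mul_r (j : ZMod m) : ∑ k, f (sr k * r j) = ∑ k, f (sr k) := by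
  simp only [sr_mul_r]
  exact Equiv.sum_comp (Equiv.addRight j) (fun k => f (sr k))

theorem sum_sr_mul_sr (j : ZMod m) : ∑ k, f (sr k * sr j) = ∑ k, f (r k) := by
  simp only [sr_mul_sr]
  exact Equiv.sum_comp (Equiv.subLeft j) (fun k => f (r k))

theorem sum_prod_ofFn_sr_succ (t : ℕ) :
    ∑ g : Fin (t + 1) → ZMod m, f (List.ofFn fun i => sr (g i)).prod =
      ∑ g : Fin t → ZMod m, ∑ k, f (sr k * (List.ofFn fun i => sr (g i)).prod) := by
  rw [← (Fin.consEquiv fun _ => ZMod m).sum_comp, Fintype.sum_prod_type, sum_comm]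
  simp [Fin.consEquiv, List.ofFn_succ]

theorem sum_prod_ofFn_sr (t : ℕ) :
    ∑ g : Fin (t + 1) → ZMod m, f (List.ofFn fun i => sr (g i)).prod =
      m ^ t • if Even t then ∑ k, f (sr k) else ∑ k, f (r k) := by
  induction t generalizing f with
  | zero => simpa using Equiv.sum_comp (Equiv.funUnique (Fin 1) (ZMod m)) (fun k => f (sr k))
  | succ t ih =>
    rw [sum_prod_ofFn_sr_succ, ih fun w => ∑ k, f (sr k * w)]
    rcases Nat.even_or_odd t with ht | ht
    · rw [if_pos ht, if_neg (Nat.not_even_iff_odd.2 ht.add_one),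
        sum_congr rfl fun j _ => sum_sr_mul_sr f j, sum_const, card_univ, ZMod.card, pow_succ,
        mul_smul]
    · rw [if_neg (Nat.not_even_iff_odd.2 ht), if_pos ht.add_one,
        sum_congr rfl fun j _ => sum_sr_mul_r f j, sum_const, card_univ, ZMod.card, pow_succ,
        mul_smul]

end SumOverWords

end DihedralGroup

theorem expected_length_reflections_dihedral_odd_general (m t : ℕ) [NeZero m]
    (hmo : Odd m) (ht : 1 ≤ t) :
    dihedralExpLen m t = (m : ℝ) / 2 - (-1 : ℝ) ^ t / (2 * m) := by
  obtain ⟨t, rfl⟩ := Nat.exists_eq_add_of_le' ht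
  have hr : 2 * ∑ k, (dLen m (r k) : ℝ) + 1 = m ^ 2 := by
    exact_mod_cast two_mul_sum_dLen_r_add_one hmo
  have hsr : 2 * ∑ k, (dLen m (sr k) : ℝ) = m ^ 2 + 1 := by
    exact_mod_cast two_mul_sum_dLen_sr hmo
  have hm : (m : ℝ) ≠ 0 := NeZero.ne _
  rw [dihedralExpLen_eq_sum, sum_prod_ofFn_sr (fun w => (dLen m w : ℝ)), nsmul_eq_mul]
  push_cast
  rcases Nat.even_or_odd t with hte | hto
  · rw [if_pos hte, hte.add_one.neg_one_pow]
    field_simp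
    linear_combination (m : ℝ) ^ (t + 1) * hsr
  · rw [if_neg (Nat.not_even_iff_odd.2 hto), hto.add_one.neg_one_pow]
    field_simp
    linear_combination (m : ℝ) ^ (t + 1) * hr

theorem expected_length_reflections_dihedral_odd (m t : ℕ) [NeZero m]
    (hm : 2 ≤ m) (hmo : Odd m) (ht : 1 ≤ t) :
    dihedralExpLen m t = (m : ℝ) / 2 - (-1 : ℝ) ^ t / (2 * m) :=
  expected_length_reflections_dihedral_odd_general m t hmo ht
end

section
/- Let n ≥ 1, x ∈ ℝ, and define v^{(t)}: ℐ_n → ℝ by v^{(0)}_{ij} = sgn(j - i) and v^{(t+1)}_{ij} = x v^{(t)}_{ij} + ∑_{|i'| ≠ |j|} v^{(t)}_{i'j} + ∑_{|j'| ≠ |i|} v^{(t)}_{ij'}. Then v^{(t)}_{ij} = ((j - i - sgn j + sgn i)/(n-1)) (2n - 2 + x)^t + (sgn(j-i) - (j - i - sgn j + sgn i)/(n-1)) x^t. -/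
/-- The index set `[-n, n] \ {0}` as a finset of integers. -/
noncomputable def signedIdx (n : ℕ) : Finset ℤ := (Finset.Icc (-(n : ℤ)) n).erase 0

/-- Membership in `ℐₙ = {(i,j) : i,j ∈ [-n,n]\{0}, |i| ≠ |j|}`. -/
def memI (n : ℕ) (i j : ℤ) : Prop :=
  i ∈ signedIdx n ∧ j ∈ signedIdx n ∧ |i| ≠ |j|

/-- The operator `Q`: `(Qv)_{ij} = ∑_{|i'|≠|j|} v_{i'j} + ∑_{|j'|≠|i|} v_{ij'}`,
where `i', j'` run over `[-n,n]\{0}`. -/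
noncomputable def QD (n : ℕ) (v : ℤ → ℤ → ℝ) : ℤ → ℤ → ℝ := fun i j =>
  (∑ i' ∈ (signedIdx n).filter (fun i' => |i'| ≠ |j|), v i' j)
  + ∑ j' ∈ (signedIdx n).filter (fun j' => |j'| ≠ |i|), v i j'

/-!
With `a i j = (j - sgn j) - (i - sgn i)` and `s i j = sgn (j - i)`, the operator `Q` maps `a` to
`(2n - 2) a` (the odd function `b ↦ b - sgn b` sums to zero over `|b| ≠ |a|`) and `s` to `2 a`
(since `∑_{|b| ≠ |a|} sgn (a - b) = 2 (a - sgn a)`). So the span of `a` and `s` is invariant and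
`x + Q` acts on it by a triangular matrix with eigenvalues `2n - 2 + x` and `x`.
-/

lemma sum_sign_Icc {L U : ℤ} (hL : L ≤ 0) (hU : 0 ≤ U) :
    ∑ c ∈ Finset.Icc L U, c.sign = U + L := by
  have hsplit : Finset.Icc L U = Finset.Ico L 0 ∪ Finset.Icc 0 U := by
    ext c; simp only [Finset.mem_Icc, Finset.mem_union, Finset.mem_Ico]; omega
  have hneg : ∑ c ∈ Finset.Ico L 0, c.sign = L := by
    rw [Finset.sum_congr rfl fun c hc => Int.sign_eq_neg_one_of_neg (Finset.mem_Ico.mp hc).2]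
    simp; omega
  have hpos : ∑ c ∈ Finset.Icc 0 U, c.sign = U := by
    rw [Finset.Icc_eq_cons_Ioc hU, Finset.sum_cons,
      Finset.sum_congr rfl fun c hc => Int.sign_eq_one_of_pos (Finset.mem_Ioc.mp hc).1]
    simp; omega
  rw [hsplit, Finset.sum_union (Finset.disjoint_left.mpr fun c h h' => by
    simp only [Finset.mem_Ico, Finset.mem_Icc] at h h'; omega), hneg, hpos, add_comm]

namespace signedIdx

variable {n : ℕ} {a : ℤ}

lemma mem_iff : a ∈ signedIdx n ↔ a ≠ 0 ∧ -(n : ℤ) ≤ a ∧ a ≤ n := by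
  simp [signedIdx]

lemma neg_mem (ha : a ∈ signedIdx n) : -a ∈ signedIdx n := by
  rw [mem_iff] at ha ⊢; omega

lemma card_eq : (signedIdx n).card = 2 * n := by
  rw [signedIdx, Finset.card_erase_of_mem (by simp), Int.card_Icc]
  omega

lemma sum_eq_zero_of_odd {M : Type*} [AddCommGroup M] (f : ℤ → M) (hf : ∀ b, f (-b) = -f b) :
    ∑ b ∈ signedIdx n, f b = 0 :=
  Finset.sum_involution (fun b _ => -b) (fun b _ => by rw [hf, add_neg_cancel])
    (fun b hb _ h => by rw [mem_iff] at hb; omega) (fun b hb => neg_mem hb)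
    (fun b _ => neg_neg b)

lemma filter_abs_ne_eq_sdiff (a : ℤ) :
    (signedIdx n).filter (fun b => |b| ≠ |a|) = signedIdx n \ {a, -a} := by
  ext b
  simp [abs_eq_abs]

lemma sum_filter_abs_ne {M : Type*} [AddCommGroup M] (ha : a ∈ signedIdx n) (f : ℤ → M) :
    ∑ b ∈ (signedIdx n).filter (fun b => |b| ≠ |a|), f b
      = ∑ b ∈ signedIdx n, f b - f a - f (-a) := by
  have ha0 : a ≠ 0 := (mem_iff.mp ha).1
  rw [filter_abs_ne_eq_sdiff, Finset.sum_sdiff_eq_sub (Finset.insert_subset ha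
    (Finset.singleton_subset_iff.mpr (neg_mem ha))), Finset.sum_pair (by omega), sub_add_eq_sub_sub]

lemma sum_filter_abs_ne_of_odd {M : Type*} [AddCommGroup M] (ha : a ∈ signedIdx n) (f : ℤ → M)
    (hf : ∀ b, f (-b) = -f b) :
    ∑ b ∈ (signedIdx n).filter (fun b => |b| ≠ |a|), f b = 0 := by
  rw [sum_filter_abs_ne ha, sum_eq_zero_of_odd f hf, hf]; abel

lemma card_filter_abs_ne (ha : a ∈ signedIdx n) :
    (((signedIdx n).filter (fun b => |b| ≠ |a|)).card : ℝ) = 2 * n - 2 := by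
  have := sum_filter_abs_ne ha (fun _ => (1 : ℝ))
  simp only [Finset.sum_const, card_eq, nsmul_eq_mul, mul_one] at this
  rw [this]; push_cast; ring

lemma sum_sign_sub (ha : a ∈ signedIdx n) :
    ∑ b ∈ signedIdx n, (a - b).sign = 2 * a - a.sign := by
  have ha' := mem_iff.mp ha
  have hshift : ∑ b ∈ Finset.Icc (-(n : ℤ)) n, (a - b).sign
      = ∑ c ∈ Finset.Icc (a - n) (a + n), c.sign :=
    Finset.sum_nbij' (fun b => a - b) (fun c => a - c)
      (fun b hb => by simp only [Finset.mem_Icc] at hb ⊢; omega)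
      (fun c hc => by simp only [Finset.mem_Icc] at hc ⊢; omega)
      (fun b _ => sub_sub_cancel a b) (fun c _ => sub_sub_cancel a c) (fun _ _ => rfl)
  rw [signedIdx, Finset.sum_erase_eq_sub (Finset.mem_Icc.mpr (by omega)), hshift,
    sum_sign_Icc (by omega) (by omega), sub_zero]
  ring

lemma sum_filter_abs_ne_sign_sub (ha : a ∈ signedIdx n) :
    ∑ b ∈ (signedIdx n).filter (fun b => |b| ≠ |a|), (a - b).sign = 2 * (a - a.sign) := by
  rw [sum_filter_abs_ne ha, sum_sign_sub ha, sub_self, sub_neg_eq_add,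
    ← two_mul, Int.sign_mul, Int.sign_zero, show Int.sign 2 = 1 from rfl]
  ring

end signedIdx

section QD

variable {n : ℕ} {i j : ℤ}

lemma QD_congr {f g : ℤ → ℤ → ℝ} (hfg : ∀ i j, memI n i j → f i j = g i j)
    (hi : i ∈ signedIdx n) (hj : j ∈ signedIdx n) : QD n f i j = QD n g i j := by
  refine congrArg₂ (· + ·) (Finset.sum_congr rfl fun i' hi' => ?_)
    (Finset.sum_congr rfl fun j' hj' => ?_)
  · rw [Finset.mem_filter] at hi'
    exact hfg i' j ⟨hi'.1, hj, hi'.2⟩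
  · rw [Finset.mem_filter] at hj'
    exact hfg i j' ⟨hi, hj'.1, hj'.2.symm⟩

lemma QD_add_mul (f g : ℤ → ℤ → ℝ) (c d : ℝ) :
    QD n (fun i j => f i j * c + g i j * d) i j = QD n f i j * c + QD n g i j * d := by
  simp only [QD, Finset.sum_add_distrib, ← Finset.sum_mul]
  ring

lemma QD_reducedDiff (hi : i ∈ signedIdx n) (hj : j ∈ signedIdx n) :
    QD n (fun i j => ((j - i - j.sign + i.sign : ℤ) : ℝ)) i j
      = (2 * n - 2) * ((j - i - j.sign + i.sign : ℤ) : ℝ) := by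
  set φ : ℤ → ℝ := fun b => ((b - b.sign : ℤ) : ℝ) with hφ_def
  have hφ_odd : ∀ b, φ (-b) = -φ b := fun b => by
    simp only [hφ_def, Int.sign_neg]; push_cast; ring
  have hcol : ∑ i' ∈ (signedIdx n).filter (fun i' => |i'| ≠ |j|),
      ((j - i' - j.sign + i'.sign : ℤ) : ℝ)
        = ∑ i' ∈ (signedIdx n).filter (fun i' => |i'| ≠ |j|), (φ j - φ i') :=
    Finset.sum_congr rfl fun _ _ => by simp only [hφ_def]; push_cast; ring
  have hrow : ∑ j' ∈ (signedIdx n).filter (fun j' => |j'| ≠ |i|),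
      ((j' - i - j'.sign + i.sign : ℤ) : ℝ)
        = ∑ j' ∈ (signedIdx n).filter (fun j' => |j'| ≠ |i|), (φ j' - φ i) :=
    Finset.sum_congr rfl fun _ _ => by simp only [hφ_def]; push_cast; ring
  simp only [QD]
  rw [hcol, hrow, Finset.sum_sub_distrib, Finset.sum_sub_distrib, Finset.sum_const,
    Finset.sum_const, signedIdx.sum_filter_abs_ne_of_odd hj φ hφ_odd,
    signedIdx.sum_filter_abs_ne_of_odd hi φ hφ_odd, nsmul_eq_mul, nsmul_eq_mul,
    signedIdx.card_filter_abs_ne hj, signedIdx.card_filter_abs_ne hi]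
  simp only [hφ_def]; push_cast; ring

lemma QD_signDiff (hi : i ∈ signedIdx n) (hj : j ∈ signedIdx n) :
    QD n (fun i j => ((j - i).sign : ℝ)) i j = 2 * ((j - i - j.sign + i.sign : ℤ) : ℝ) := by
  have hcol : ∑ i' ∈ (signedIdx n).filter (fun i' => |i'| ≠ |j|), ((j - i').sign : ℝ)
      = ((2 * (j - j.sign) : ℤ) : ℝ) := by
    rw [← signedIdx.sum_filter_abs_ne_sign_sub hj, Int.cast_sum]
  have hrow : ∑ j' ∈ (signedIdx n).filter (fun j' => |j'| ≠ |i|), ((j' - i).sign : ℝ)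
      = -((2 * (i - i.sign) : ℤ) : ℝ) := by
    rw [← signedIdx.sum_filter_abs_ne_sign_sub hi, Int.cast_sum, ← Finset.sum_neg_distrib]
    exact Finset.sum_congr rfl fun b _ => by rw [← neg_sub, Int.sign_neg, Int.cast_neg]
  simp only [QD]
  rw [hcol, hrow]
  push_cast; ring

end QD

theorem recurrence_solution (n : ℕ) (hn : 2 ≤ n) (x : ℝ) (v : ℕ → ℤ → ℤ → ℝ)
    (h0 : ∀ i j, memI n i j → v 0 i j = ((j - i).sign : ℝ))
    (hrec : ∀ t i j, memI n i j → v (t + 1) i j = x * v t i j + QD n (v t) i j) :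
    ∀ t i j, memI n i j →
      v t i j =
        ((j - i - j.sign + i.sign : ℤ) : ℝ) / ((n : ℝ) - 1) * (2 * n - 2 + x) ^ t
        + (((j - i).sign : ℝ) - ((j - i - j.sign + i.sign : ℤ) : ℝ) / ((n : ℝ) - 1)) * x ^ t := by
  have hn1 : (n : ℝ) - 1 ≠ 0 := by
    have : (2 : ℝ) ≤ n := by exact_mod_cast hn
    linarith
  intro t
  induction t with
  | zero => intro i j hij; simp [h0 i j hij]
  | succ t ih =>
    intro i j hij
    have hsplit : ∀ i j, memI n i j → v t i j
        = ((j - i - j.sign + i.sign : ℤ) : ℝ) * (((2 * n - 2 + x) ^ t - x ^ t) / ((n : ℝ) - 1))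
          + ((j - i).sign : ℝ) * x ^ t := fun i j hij => by
      rw [ih i j hij]; ring
    rw [hrec t i j hij, QD_congr hsplit hij.1 hij.2.1, QD_add_mul,
      QD_reducedDiff hij.1 hij.2.1, QD_signDiff hij.1 hij.2.1, hsplit i j hij]
    field_simp
    ring
end

section
/- Let π be a product of t independent uniformly random reflections in B_n, n ≥ 1. For 1 ≤ i ≤ n, P(π(-i) > π(i)) = 1/2 - (1/2)(1 - 2/n)^t. -/
open Classical

/-- The index set `[-n, n] \ {0}` as a finset of integers. -/
noncomputable def signedIdxF (n : ℕ) : Finset ℤ := (Finset.Icc (-(n : ℤ)) n).erase 0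

/-- The type of indices `[-n, n] \ {0}`. -/
abbrev SIdx (n : ℕ) := {x : ℤ // x ∈ signedIdxF n}

/-- Negation on the index set. -/
def negIdx {n : ℕ} (a : SIdx n) : SIdx n :=
  ⟨-a.1, by
    have h := a.2
    simp only [signedIdxF, Finset.mem_erase, Finset.mem_Icc] at h ⊢
    omega⟩

/-- The reflections of `Bₙ` in its signed-permutation representation:
the elements `(i,j)(-i,-j)` with `1 ≤ |i| < j ≤ n` together with
the elements `(i,-i)` with `1 ≤ i ≤ n`. -/
def BRefl (n : ℕ) : Set (Equiv.Perm (SIdx n)) :=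
  {π | (∃ a b : SIdx n, a ≠ b ∧ a ≠ negIdx b ∧
          π = Equiv.swap a b * Equiv.swap (negIdx a) (negIdx b))
     ∨ (∃ a : SIdx n, π = Equiv.swap a (negIdx a))}

/-- The reflections of `Dₙ`: the elements `(i,j)(-i,-j)` with `1 ≤ |i| < j ≤ n`. -/
def DRefl (n : ℕ) : Set (Equiv.Perm (SIdx n)) :=
  {π | ∃ a b : SIdx n, a ≠ b ∧ a ≠ negIdx b ∧
          π = Equiv.swap a b * Equiv.swap (negIdx a) (negIdx b)}

/-- The number of B-inversions: pairs `(i, j)` with `j ≥ |i|` and `π i > π j`. -/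
noncomputable def BLen (n : ℕ) (π : Equiv.Perm (SIdx n)) : ℕ :=
  (Finset.univ.filter (fun p : SIdx n × SIdx n =>
      |p.1.1| ≤ p.2.1 ∧ (π p.2).1 < (π p.1).1)).card

/-- The number of D-inversions: pairs `(i, j)` with `j > |i|` and `π i > π j`. -/
noncomputable def DLen (n : ℕ) (π : Equiv.Perm (SIdx n)) : ℕ :=
  (Finset.univ.filter (fun p : SIdx n × SIdx n =>
      |p.1.1| < p.2.1 ∧ (π p.2).1 < (π p.1).1)).card

/-- The probability that `π i > π j` where `π` is a product of `t` independent
uniformly random reflections in `Bₙ`. -/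
noncomputable def BProbGt (n t : ℕ) (i j : SIdx n) : ℝ :=
  ((Finset.univ.filter (fun f : Fin t → Equiv.Perm (SIdx n) =>
      (∀ k, f k ∈ BRefl n) ∧ ((List.ofFn f).prod j).1 < ((List.ofFn f).prod i).1)).card : ℝ) /
    ((Finset.univ.filter (fun π : Equiv.Perm (SIdx n) => π ∈ BRefl n)).card : ℝ) ^ t

/-!
Reflections commute with `x ↦ -x`, so `π(-i) > π(i)` iff `π(i) < 0`, and only the sign of `π(i)`
matters. For any `y` and any `z ≠ y` exactly one reflection sends `y` to `z`; hence, whatever `y`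
is, exactly `n` of the `n²` reflections change the sign of `y`. The sign of `π(i)` is thus a
two-state Markov chain that flips with probability `1/n` at each step, started at `+`, and
`p (t + 1) = p t * (1 - 2/n) + 1/n` with `p 0 = 0` solves to the formula.
-/

open Finset Fintype Equiv

section RandomWalk

lemma card_filter_piFinset_succ {β : Type*} {t : ℕ} (S : Finset β) (Q : β → (Fin t → β) → Prop)
    [∀ s g, Decidable (Q s g)] :
    #{f ∈ piFinset (fun _ : Fin (t + 1) => S) | Q (f 0) (Fin.tail f)} =
      ∑ g ∈ piFinset (fun _ : Fin t => S), #{s ∈ S | Q s g} := by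
  have h := filter_piFinset_eq_map_consEquiv (fun _ : Fin (t + 1) => S) (fun _ => True)
  simp only [filter_true] at h
  rw [h, filter_map, card_map, card_filter, sum_product_right]
  exact sum_congr rfl fun g _ => (card_filter _ _).symm

variable {M α : Type*} [Monoid M] [MulAction M α]

def walkCount (S : Finset M) (P : α → Prop) [DecidablePred P] (x : α) (t : ℕ) : ℕ :=
  #{f ∈ piFinset (fun _ : Fin t => S) | P ((List.ofFn f).prod • x)}

noncomputable def randomWalkProb (S : Finset M) (P : α → Prop) [DecidablePred P] (x : α)
    (t : ℕ) : ℝ :=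
  walkCount S P x t / (#S : ℝ) ^ t

variable {S : Finset M} {P : α → Prop} [DecidablePred P] {b : ℕ}

lemma card_filter_smul_eq_ite (hflip : ∀ y, #{s ∈ S | ¬(P (s • y) ↔ P y)} = b) (y : α) :
    (#{s ∈ S | P (s • y)} : ℝ) = if P y then (#S - b : ℝ) else b := by
  have hb := hflip y
  split_ifs with hy
  · simp only [hy, iff_true] at hb
    rw [← hb, ← card_filter_add_card_filter_not (s := S) (fun s => P (s • y))]
    push_cast
    ring
  · simp only [hy, iff_false, not_not] at hb
    rw [hb]

lemma walkCount_succ (hflip : ∀ y, #{s ∈ S | ¬(P (s • y) ↔ P y)} = b) (x : α) (t : ℕ) :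
    (walkCount S P x (t + 1) : ℝ) =
      walkCount S P x t * (#S - b) + (#S ^ t - walkCount S P x t) * b := by
  have hsplit : ∀ f : Fin (t + 1) → M,
      (List.ofFn f).prod • x = f 0 • (List.ofFn (Fin.tail f)).prod • x := by
    intro f
    rw [List.ofFn_succ, List.prod_cons, mul_smul]
    rfl
  have hcount := card_filter_piFinset_succ (t := t) S
    (fun s (g : Fin t → M) => P (s • (List.ofFn g).prod • x))
  simp only [← hsplit] at hcount
  have hsum : (walkCount S P x t : ℝ) +
      #{g ∈ piFinset (fun _ : Fin t => S) | ¬P ((List.ofFn g).prod • x)} = #S ^ t := by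
    exact_mod_cast (card_filter_add_card_filter_not _).trans (card_piFinset_const S t)
  unfold walkCount at hsum ⊢
  rw [hcount, Nat.cast_sum]
  simp only [card_filter_smul_eq_ite hflip, sum_ite, sum_const, nsmul_eq_mul]
  linear_combination (b : ℝ) * hsum

lemma randomWalkProb_succ (hS : S.Nonempty) (hflip : ∀ y, #{s ∈ S | ¬(P (s • y) ↔ P y)} = b)
    (x : α) (t : ℕ) :
    randomWalkProb S P x (t + 1) =
      randomWalkProb S P x t * (1 - 2 * b / #S) + b / #S := by
  have hS' : (#S : ℝ) ≠ 0 := by exact_mod_cast hS.card_pos.ne'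
  rw [randomWalkProb, randomWalkProb, walkCount_succ hflip]
  field_simp
  ring

lemma randomWalkProb_eq_of_not (hS : S.Nonempty)
    (hflip : ∀ y, #{s ∈ S | ¬(P (s • y) ↔ P y)} = b) {x : α} (hx : ¬P x) (t : ℕ) :
    randomWalkProb S P x t = 1 / 2 - 1 / 2 * (1 - 2 * b / #S) ^ t := by
  induction t with
  | zero => simp [randomWalkProb, walkCount, hx]
  | succ t ih =>
    rw [randomWalkProb_succ hS hflip, ih]
    ring

end RandomWalk

section Hyperoctahedral

variable {n : ℕ}

@[simp] lemma negIdx_val (a : SIdx n) : (negIdx a).1 = -a.1 := rfl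

lemma SIdx.val_ne_zero (a : SIdx n) : a.1 ≠ 0 := (Finset.mem_erase.1 a.2).1

@[simp] lemma negIdx_negIdx (a : SIdx n) : negIdx (negIdx a) = a := Subtype.ext (neg_neg a.1)

lemma negIdx_injective : Function.Injective (negIdx (n := n)) :=
  Function.LeftInverse.injective negIdx_negIdx

lemma negIdx_eq_iff {a b : SIdx n} : negIdx a = b ↔ a = negIdx b :=
  ⟨fun h => by rw [← h, negIdx_negIdx], fun h => by rw [h, negIdx_negIdx]⟩

lemma negIdx_ne_self (a : SIdx n) : negIdx a ≠ a := by
  have := a.val_ne_zero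
  simp only [ne_eq, Subtype.ext_iff, negIdx_val]
  omega

def reflTo (a b : SIdx n) : Perm (SIdx n) :=
  if b = negIdx a then swap a b else swap a b * swap (negIdx a) (negIdx b)

lemma swap_mul_swap_negIdx_comm {a b : SIdx n} (h : b ≠ negIdx a) :
    swap a b * swap (negIdx a) (negIdx b) = swap (negIdx a) (negIdx b) * swap a b := by
  have hb : a ≠ negIdx b := fun e => h (negIdx_eq_iff.2 e).symm
  rw [swap_mul_eq_mul_swap, swap_inv, swap_apply_of_ne_of_ne (negIdx_ne_self a).symm hb,
    swap_apply_of_ne_of_ne h (negIdx_ne_self b).symm]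

lemma reflTo_apply_self (a b : SIdx n) : reflTo a b a = b := by
  unfold reflTo
  split_ifs with h
  · exact swap_apply_left a b
  · have hb : a ≠ negIdx b := fun e => h (negIdx_eq_iff.2 e).symm
    rw [Perm.mul_apply, swap_apply_of_ne_of_ne (negIdx_ne_self a).symm hb, swap_apply_left]

lemma reflTo_comm (a b : SIdx n) : reflTo a b = reflTo b a := by
  unfold reflTo
  rw [if_congr (eq_comm.trans negIdx_eq_iff) rfl rfl, swap_comm a b, swap_comm (negIdx a)]

lemma reflTo_negIdx (a b : SIdx n) : reflTo (negIdx a) (negIdx b) = reflTo a b := by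
  unfold reflTo
  simp only [negIdx_negIdx, negIdx_eq_iff]
  split_ifs with h
  · rw [h, negIdx_negIdx, swap_comm]
  · exact (swap_mul_swap_negIdx_comm h).symm

lemma reflTo_apply_negIdx (a b x : SIdx n) : reflTo a b (negIdx x) = negIdx (reflTo a b x) := by
  have hsw : ∀ c d y : SIdx n, swap c d (negIdx y) = negIdx (swap (negIdx c) (negIdx d) y) :=
    fun c d y => by
      simpa using negIdx_injective.swap_apply (negIdx c) (negIdx d) y
  nth_rewrite 1 [← reflTo_negIdx]
  unfold reflTo
  simp only [negIdx_negIdx, negIdx_eq_iff]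
  split_ifs <;> simp only [Perm.mul_apply, hsw, negIdx_negIdx]

lemma reflTo_apply_of_ne {a b x : SIdx n} (ha : x ≠ a) (hb : x ≠ b) (ha' : x ≠ negIdx a)
    (hb' : x ≠ negIdx b) : reflTo a b x = x := by
  unfold reflTo
  split_ifs
  · exact swap_apply_of_ne_of_ne ha hb
  · rw [Perm.mul_apply, swap_apply_of_ne_of_ne ha' hb', swap_apply_of_ne_of_ne ha hb]

lemma mem_BRefl_iff {r : Perm (SIdx n)} : r ∈ BRefl n ↔ ∃ a b, a ≠ b ∧ r = reflTo a b := by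
  constructor
  · rintro (⟨a, b, hab, hab', rfl⟩ | ⟨a, rfl⟩)
    · refine ⟨a, b, hab, ?_⟩
      rw [reflTo, if_neg fun e => hab' (negIdx_eq_iff.1 e.symm)]
    · exact ⟨a, negIdx a, (negIdx_ne_self a).symm, by rw [reflTo, if_pos rfl]⟩
  · rintro ⟨a, b, hab, rfl⟩
    by_cases h : b = negIdx a
    · exact Or.inr ⟨a, by rw [reflTo, if_pos h, h]⟩
    · exact Or.inl ⟨a, b, hab, fun e => h (negIdx_eq_iff.2 e).symm, by rw [reflTo, if_neg h]⟩

lemma reflTo_mem_BRefl {a b : SIdx n} (h : a ≠ b) : reflTo a b ∈ BRefl n :=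
  mem_BRefl_iff.2 ⟨a, b, h, rfl⟩

lemma eq_reflTo_apply {r : Perm (SIdx n)} (hr : r ∈ BRefl n) {v : SIdx n} (hv : r v ≠ v) :
    r = reflTo v (r v) := by
  obtain ⟨a, b, -, rfl⟩ := mem_BRefl_iff.1 hr
  have hmoved : v = a ∨ v = b ∨ v = negIdx a ∨ v = negIdx b := by
    by_contra! h
    exact hv (reflTo_apply_of_ne h.1 h.2.1 h.2.2.1 h.2.2.2)
  rcases hmoved with rfl | rfl | rfl | rfl
  · rw [reflTo_apply_self]
  · rw [reflTo_comm, reflTo_apply_self]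
  · rw [reflTo_apply_negIdx, reflTo_apply_self, reflTo_negIdx]
  · rw [reflTo_comm, reflTo_apply_negIdx, reflTo_apply_self, reflTo_negIdx]

lemma card_filter_val_signedIdx (p : ℤ → Prop) [DecidablePred p] :
    #{z : SIdx n | p z.1} = #{x ∈ signedIdxF n | p x} := by
  rw [← card_map (Function.Embedding.subtype _)]
  congr 1
  ext x
  simp [and_comm]

lemma card_neg_signedIdx : #{z : SIdx n | z.1 < 0} = n := by
  rw [card_filter_val_signedIdx (· < 0), show {x ∈ signedIdxF n | x < 0} = Icc (-(n : ℤ)) (-1) by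
    ext x; simp only [signedIdxF, mem_filter, mem_erase, mem_Icc]; omega]
  simp

lemma card_pos_signedIdx : #{z : SIdx n | 0 < z.1} = n := by
  rw [card_filter_val_signedIdx (0 < ·), show {x ∈ signedIdxF n | 0 < x} = Icc 1 (n : ℤ) by
    ext x; simp only [signedIdxF, mem_filter, mem_erase, mem_Icc]; omega]
  simp

noncomputable def reflections (n : ℕ) : Finset (Perm (SIdx n)) := {r | r ∈ BRefl n}

@[simp] lemma mem_reflections {r : Perm (SIdx n)} : r ∈ reflections n ↔ r ∈ BRefl n := by
  simp [reflections]

lemma card_filter_reflections_apply_mem (v : SIdx n) {T : Finset (SIdx n)} (hv : v ∉ T) :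
    #{r ∈ reflections n | r v ∈ T} = #T := by
  apply card_nbij' (· v) (reflTo v)
  · intro r hr
    exact (mem_filter.1 hr).2
  · intro z hz
    rw [mem_coe] at hz
    rw [mem_coe, mem_filter, mem_reflections, reflTo_apply_self]
    exact ⟨reflTo_mem_BRefl (ne_of_mem_of_not_mem hz hv).symm, hz⟩
  · intro r hr
    obtain ⟨hrB, hrT⟩ := mem_filter.1 hr
    exact (eq_reflTo_apply (mem_reflections.1 hrB) fun h => hv (by rwa [h] at hrT)).symm
  · intro z _
    exact reflTo_apply_self v z

/-- Every reflection is `reflOfPair i j` for exactly one pair `0 < i, j`. -/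
def reflOfPair (i j : SIdx n) : Perm (SIdx n) := reflTo i (if i.1 < j.1 then j else negIdx j)

variable {i j : SIdx n}

lemma reflOfPair_mem_BRefl (hj : 0 < j.1) : reflOfPair i j ∈ BRefl n := by
  apply reflTo_mem_BRefl
  split_ifs with h <;> simp only [ne_eq, Subtype.ext_iff, negIdx_val] <;> omega

lemma reflOfPair_apply_left : (reflOfPair i j i).1 = if i.1 < j.1 then j.1 else -j.1 := by
  rw [reflOfPair, reflTo_apply_self]
  split_ifs <;> rfl

lemma reflOfPair_apply_right : (reflOfPair i j j).1 = if i.1 < j.1 then i.1 else -i.1 := by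
  unfold reflOfPair
  split_ifs
  · rw [reflTo_comm, reflTo_apply_self]
  · have := reflTo_apply_negIdx i (negIdx j) (negIdx j)
    rw [negIdx_negIdx, reflTo_comm, reflTo_apply_self] at this
    rw [reflTo_comm, this, negIdx_val]

lemma reflOfPair_apply_of_ne {x : SIdx n} (hi : 0 < i.1) (hj : 0 < j.1) (hx : 0 < x.1)
    (hxi : x ≠ i) (hxj : x ≠ j) : reflOfPair i j x = x := by
  rw [Ne, Subtype.ext_iff] at hxi hxj
  unfold reflOfPair
  split_ifs <;> apply reflTo_apply_of_ne <;> simp only [ne_eq, Subtype.ext_iff, negIdx_val] <;>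
    omega

lemma reflOfPair_injOn {i' j' : SIdx n} (hi : 0 < i.1) (hj : 0 < j.1) (hi' : 0 < i'.1)
    (hj' : 0 < j'.1) (h : reflOfPair i j = reflOfPair i' j') : i = i' ∧ j = j' := by
  have hmoved : i = i' ∨ i = j' := by
    by_contra! hne
    have hfix := reflOfPair_apply_of_ne hi' hj' hi hne.1 hne.2
    rw [← h, Subtype.ext_iff, reflOfPair_apply_left] at hfix
    split_ifs at hfix <;> omega
  have happ := congrArg Subtype.val (DFunLike.congr_fun h i)
  rw [reflOfPair_apply_left] at happ
  rcases hmoved with rfl | rfl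
  · rw [reflOfPair_apply_left] at happ
    exact ⟨rfl, Subtype.ext (by split_ifs at happ <;> omega)⟩
  · rw [reflOfPair_apply_right] at happ
    exact ⟨Subtype.ext (by split_ifs at happ <;> omega),
      Subtype.ext (by split_ifs at happ <;> omega)⟩

lemma exists_reflOfPair_eq_reflTo {a b : SIdx n} (ha : 0 < a.1) (hab : a ≠ b) :
    ∃ i j : SIdx n, 0 < i.1 ∧ 0 < j.1 ∧ reflOfPair i j = reflTo a b := by
  rcases lt_or_gt_of_ne b.val_ne_zero with hb | hb
  · have hb' : 0 < (negIdx b).1 := by rw [negIdx_val]; omega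
    rcases le_or_gt (-b.1) a.1 with h | h
    · refine ⟨a, negIdx b, ha, hb', ?_⟩
      rw [reflOfPair, if_neg (by rw [negIdx_val]; omega), negIdx_negIdx]
    · refine ⟨negIdx b, a, hb', ha, ?_⟩
      rw [reflOfPair, if_neg (by rw [negIdx_val]; omega), reflTo_negIdx, reflTo_comm]
  · rcases lt_or_gt_of_ne (fun e => hab (Subtype.ext e) : a.1 ≠ b.1) with h | h
    · exact ⟨a, b, ha, hb, by rw [reflOfPair, if_pos h]⟩
    · exact ⟨b, a, hb, ha, by rw [reflOfPair, if_pos h, reflTo_comm]⟩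

lemma exists_reflOfPair_eq {r : Perm (SIdx n)} (hr : r ∈ BRefl n) :
    ∃ i j : SIdx n, 0 < i.1 ∧ 0 < j.1 ∧ reflOfPair i j = r := by
  obtain ⟨a, b, hab, rfl⟩ := mem_BRefl_iff.1 hr
  rcases lt_or_gt_of_ne a.val_ne_zero with ha | ha
  · rw [← reflTo_negIdx]
    exact exists_reflOfPair_eq_reflTo (by rw [negIdx_val]; omega) (negIdx_injective.ne hab)
  · exact exists_reflOfPair_eq_reflTo ha hab

lemma card_reflections : #(reflections n) = n ^ 2 := by
  let pos : Finset (SIdx n) := {z | 0 < z.1}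
  rw [show n ^ 2 = #(pos ×ˢ pos) by rw [card_product, card_pos_signedIdx, sq]]
  symm
  apply card_bij (fun p _ => reflOfPair p.1 p.2)
  · rintro ⟨i, j⟩ hp
    simp only [pos, mem_product, mem_filter, mem_univ, true_and] at hp
    exact mem_reflections.2 (reflOfPair_mem_BRefl hp.2)
  · rintro ⟨i, j⟩ hp ⟨i', j'⟩ hp' h
    simp only [pos, mem_product, mem_filter, mem_univ, true_and] at hp hp'
    obtain ⟨rfl, rfl⟩ := reflOfPair_injOn hp.1 hp.2 hp'.1 hp'.2 h
    rfl
  · intro r hr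
    obtain ⟨i, j, hi, hj, rfl⟩ := exists_reflOfPair_eq (mem_reflections.1 hr)
    exact ⟨(i, j), by simp [pos, hi, hj], rfl⟩

lemma apply_negIdx_of_mem_BRefl {r : Perm (SIdx n)} (hr : r ∈ BRefl n) (x : SIdx n) :
    r (negIdx x) = negIdx (r x) := by
  obtain ⟨a, b, -, rfl⟩ := mem_BRefl_iff.1 hr
  exact reflTo_apply_negIdx a b x

lemma list_prod_apply_negIdx {l : List (Perm (SIdx n))} (hl : ∀ r ∈ l, r ∈ BRefl n)
    (x : SIdx n) : l.prod (negIdx x) = negIdx (l.prod x) := by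
  induction l with
  | nil => rfl
  | cons r l ih =>
    rw [List.forall_mem_cons] at hl
    rw [List.prod_cons, Perm.mul_apply, ih hl.2, apply_negIdx_of_mem_BRefl hl.1, Perm.mul_apply]

lemma BProbGt_negIdx_self (t : ℕ) (i : SIdx n) :
    BProbGt n t (negIdx i) i = randomWalkProb (reflections n) (fun y : SIdx n => y.1 < 0) i t := by
  rw [BProbGt, randomWalkProb, walkCount]
  congr 3
  ext f
  simp only [mem_filter, mem_univ, true_and, mem_piFinset, mem_reflections, Perm.smul_def]
  refine and_congr_right fun hf => ?_
  rw [list_prod_apply_negIdx (by simpa [List.mem_ofFn] using hf), negIdx_val]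
  omega

lemma card_filter_reflections_sign_change (y : SIdx n) :
    #{r ∈ reflections n | ¬((r • y).1 < 0 ↔ y.1 < 0)} = n := by
  rcases lt_or_gt_of_ne y.val_ne_zero with hy | hy
  · calc _ = #{r ∈ reflections n | r y ∈ ({z | 0 < z.1} : Finset (SIdx n))} := by
          refine congrArg card (filter_congr fun r _ => ?_)
          have := (r y).val_ne_zero
          simp only [Perm.smul_def, hy, iff_true, mem_filter, mem_univ, true_and]
          omega
      _ = n := (card_filter_reflections_apply_mem y (by simp; omega)).trans card_pos_signedIdx
  · calc _ = #{r ∈ reflections n | r y ∈ ({z | z.1 < 0} : Finset (SIdx n))} := by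
          refine congrArg card (filter_congr fun r _ => ?_)
          simp only [Perm.smul_def, not_lt.2 hy.le, iff_false, not_not, mem_filter, mem_univ,
            true_and]
      _ = n := (card_filter_reflections_apply_mem y (by simp; omega)).trans card_neg_signedIdx

end Hyperoctahedral

theorem prob_neg_inversion_reflections_B_general (n t : ℕ)
    (i : SIdx n) (hi : 0 < i.1) :
    BProbGt n t (negIdx i) i = 1 / 2 - (1 / 2) * (1 - 2 / (n : ℝ)) ^ t := by
  have hS : (reflections n).Nonempty :=
    ⟨reflTo i (negIdx i), mem_reflections.2 (reflTo_mem_BRefl (negIdx_ne_self i).symm)⟩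
  have hn : (n : ℝ) ≠ 0 := by
    have := (mem_erase.1 i.2).2
    rw [mem_Icc] at this
    norm_cast
    omega
  rw [BProbGt_negIdx_self, randomWalkProb_eq_of_not (P := fun y : SIdx n => y.1 < 0) hS
    card_filter_reflections_sign_change (not_lt.2 hi.le), card_reflections]
  push_cast
  field_simp

theorem prob_neg_inversion_reflections_B (n t : ℕ) (hn : 1 ≤ n)
    (i : SIdx n) (hi : 0 < i.1) :
    BProbGt n t (negIdx i) i = 1 / 2 - (1 / 2) * (1 - 2 / (n : ℝ)) ^ t :=
  prob_neg_inversion_reflections_B_general n t i hi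
end
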